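/- Let C be a cocomplete category with pullbacks in which all small colimits are universal (every colimit cocone of a small diagram remains a colimit cocone after pullback along any morphism to its vertex, i.e., every colimit cocone is a universal colimit in Mathlib's sense). Let C₀ be a small full subcategory of C such that every object of C is the colimit of some small diagram taking values in C₀. Let S be a class of morphisms of C that is stable under pullback and closed under small colimits in the arrow category of C (for every small diagram in Arrow C all of whose objects lie in S, the vertex of any colimit cocone lies in S). Then a morphism f : X ⟶ Y lies in S if and only if for every object V of C₀ and every morphism g : V ⟶ Y, the pullback morphism V ×_Y X ⟶ V lies in S. -/

import Mathlib

/-!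
Write `Y` as the colimit of a diagram `D` with values in the generators. Since colimits are
universal, pulling back along `f` exhibits `X` as the colimit of the pullbacks of the legs
`D k ⟶ Y`, so `f` is the colimit in `Arrow C` of the arrows `pullback.snd f (c.ι.app k)`,
which lie in `S` by hypothesis; closure of `S` under colimits in `Arrow C` gives `S f`.
Replacing `D k` by an isomorphic generator uses that `S` is closed under isomorphisms,
which is itself a colimit over the one-object category.
-/

open CategoryTheory Limits

universe u

namespace CategoryTheory

variable {C : Type*} [Category C] {K : Type*} [Category K]

def NatTrans.arrowDiagram {F₁ F₂ : K ⥤ C} (α : F₁ ⟶ F₂) : K ⥤ Arrow C where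
  obj k := Arrow.mk (α.app k)
  map φ := Arrow.homMk (F₁.map φ) (F₂.map φ)

def NatTrans.arrowCocone {F₁ F₂ : K ⥤ C} (α : F₁ ⟶ F₂) (c₁ : Cocone F₁) (c₂ : Cocone F₂)
    (φ : c₁.pt ⟶ c₂.pt) (hφ : ∀ k, c₁.ι.app k ≫ φ = α.app k ≫ c₂.ι.app k) :
    Cocone α.arrowDiagram where
  pt := Arrow.mk φ
  ι.app k := Arrow.homMk (c₁.ι.app k) (c₂.ι.app k) (hφ k)
  ι.naturality _ _ φ := by
    ext
    · exact (c₁.w φ).trans (Category.comp_id _).symm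
    · exact (c₂.w φ).trans (Category.comp_id _).symm

def NatTrans.isColimitArrowCocone {F₁ F₂ : K ⥤ C} (α : F₁ ⟶ F₂) {c₁ : Cocone F₁}
    {c₂ : Cocone F₂} (h₁ : IsColimit c₁) (h₂ : IsColimit c₂)
    (φ : c₁.pt ⟶ c₂.pt) (hφ : ∀ k, c₁.ι.app k ≫ φ = α.app k ≫ c₂.ι.app k) :
    IsColimit (α.arrowCocone c₁ c₂ φ hφ) :=
  Comma.fstSndJointlyReflectColimit h₁ h₂

namespace MorphismProperty

variable (S : MorphismProperty C)

lemma isStableUnderColimitsOfShape_of_arrow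
    (hS : ∀ D : K ⥤ Arrow C, (∀ k, S (D.obj k).hom) →
      ∀ c : Cocone D, Nonempty (IsColimit c) → S c.pt.hom) :
    S.IsStableUnderColimitsOfShape K where
  condition _ _ _ _ h₁ h₂ α hα φ hφ :=
    hS α.arrowDiagram hα _ ⟨NatTrans.isColimitArrowCocone α h₁ h₂ φ hφ⟩

lemma respectsIso_of_isStableUnderColimitsOfShape_punit.{w}
    [S.IsStableUnderColimitsOfShape (Discrete PUnit.{w + 1})] : S.RespectsIso :=
  RespectsIso.of_respects_arrow_iso _ fun _ _ e hf =>
    colimitsOfShape_le _ (((S.colimitsOfShape _).arrow_mk_iso_iff e).1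
      (le_colimitsOfShape_punit.{w} S _ hf))

-- The conclusion is about `g''` rather than `g' ≫ g` so that `pullback f g''` is formed with
-- the ambient `HasPullbacks` instance, not with `hasPullbackVertPaste`.
lemma pullback_snd_comp [HasPullbacks C] [S.RespectsIso]
    (hS : ∀ {X Y Z : C} (f : X ⟶ Y) (g : Z ⟶ Y), S f → S (pullback.snd f g))
    {X Y V W : C} (f : X ⟶ Y) (g : V ⟶ Y) (g' : W ⟶ V) {g'' : W ⟶ Y} (hg : g' ≫ g = g'')
    (h : S (pullback.snd f g)) : S (pullback.snd f g'') := by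
  subst hg
  exact (S.arrow_mk_iso_iff
    (Arrow.isoMk' _ _ (pullbackLeftPullbackSndIso f g g') (Iso.refl _))).1 (hS _ g' h)

end MorphismProperty

variable [HasPullbacks C] {D : K ⥤ C} (c : Cocone D) {X : C} (f : X ⟶ c.pt)

namespace Limits.Cocone

noncomputable def pullbackDiagram : K ⥤ C where
  obj k := pullback f (c.ι.app k)
  map φ := pullback.map _ _ _ _ (𝟙 X) (D.map φ) (𝟙 c.pt) (by simp) (by simp)
  map_id _ := by simp [pullback.map_id]
  map_comp _ _ := by simp [pullback.map_comp]

lemma pullbackDiagram_map_fst {k k' : K} (φ : k ⟶ k') :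
    (c.pullbackDiagram f).map φ ≫ pullback.fst f (c.ι.app k') = pullback.fst f (c.ι.app k) :=
  (pullback.lift_fst _ _ _).trans (Category.comp_id _)

lemma pullbackDiagram_map_snd {k k' : K} (φ : k ⟶ k') :
    (c.pullbackDiagram f).map φ ≫ pullback.snd f (c.ι.app k') =
      pullback.snd f (c.ι.app k) ≫ D.map φ :=
  pullback.lift_snd _ _ _

noncomputable def pullbackCocone : Cocone (c.pullbackDiagram f) where
  pt := X
  ι.app k := pullback.fst f (c.ι.app k)
  ι.naturality _ _ φ := (c.pullbackDiagram_map_fst f φ).trans (Category.comp_id _).symm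

noncomputable def pullbackSnd : c.pullbackDiagram f ⟶ D where
  app k := pullback.snd f (c.ι.app k)
  naturality _ _ φ := c.pullbackDiagram_map_snd f φ

lemma isPullback_pullbackCocone (k : K) :
    IsPullback ((c.pullbackCocone f).ι.app k) ((c.pullbackSnd f).app k) f (c.ι.app k) :=
  IsPullback.of_hasPullback _ _

lemma equifibered_pullbackSnd : NatTrans.Equifibered (c.pullbackSnd f) := fun k k' φ => by
  refine IsPullback.of_right ?_ (c.pullbackDiagram_map_snd f φ) (c.isPullback_pullbackCocone f k')
  rw [(c.pullbackCocone f).w φ, c.w φ]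
  exact c.isPullback_pullbackCocone f k

end Limits.Cocone

lemma Limits.IsUniversalColimit.nonempty_isColimit_pullbackCocone (hc : IsUniversalColimit c) :
    Nonempty (IsColimit (c.pullbackCocone f)) :=
  hc _ (c.pullbackSnd f) f (by ext k; exact (pullback.condition (f := f) (g := c.ι.app k)).symm)
    (c.equifibered_pullbackSnd f) (c.isPullback_pullbackCocone f)

lemma MorphismProperty.of_isUniversalColimit_of_pullback_snd (S : MorphismProperty C)
    [S.IsStableUnderColimitsOfShape K] (hc : IsColimit c) (hu : IsUniversalColimit c)
    (h : ∀ k, S (pullback.snd f (c.ι.app k))) : S f :=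
  IsStableUnderColimitsOfShape.condition _ _ _ _
    (IsUniversalColimit.nonempty_isColimit_pullbackCocone c f hu).some hc (c.pullbackSnd f) h f
    fun _ => pullback.condition

end CategoryTheory

theorem statement13 {C : Type (u + 1)} [Category.{u} C]
    [HasPullbacks C]
    (huniv : ∀ (K : Type u) [SmallCategory K] (D : K ⥤ C) (c : Cocone D),
      Nonempty (IsColimit c) → IsUniversalColimit c)
    {ι : Type u} (G : ι → C)
    (hgen : ∀ Y : C, ∃ (K : Type u) (instK : SmallCategory K),
      letI := instK
      ∃ (D : K ⥤ C) (c : Cocone D),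
        Nonempty (IsColimit c) ∧ c.pt = Y ∧ ∀ k : K, ∃ i : ι, Nonempty (D.obj k ≅ G i))
    (S : MorphismProperty C)
    (hpb : ∀ {X Y Z : C} (f : X ⟶ Y) (g : Z ⟶ Y), S f → S (pullback.snd f g))
    (hcolim : ∀ (K : Type u) [SmallCategory K] (D : K ⥤ Arrow C),
      (∀ k : K, S (D.obj k).hom) → ∀ (c : Cocone D), Nonempty (IsColimit c) → S c.pt.hom)
    {X Y : C} (f : X ⟶ Y) :
    S f ↔ ∀ (i : ι) (g : G i ⟶ Y), S (pullback.snd f g) := by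
  refine ⟨fun hf i g => hpb f g hf, fun H => ?_⟩
  obtain ⟨K, _, D, c, ⟨hc⟩, rfl, hD⟩ := hgen Y
  have := S.isStableUnderColimitsOfShape_of_arrow (hcolim K)
  have := S.isStableUnderColimitsOfShape_of_arrow (hcolim (Discrete PUnit))
  have := S.respectsIso_of_isStableUnderColimitsOfShape_punit
  refine S.of_isUniversalColimit_of_pullback_snd c f hc (huniv K D c ⟨hc⟩) fun k => ?_
  obtain ⟨i, ⟨e⟩⟩ := hD k
  exact S.pullback_snd_comp hpb f (e.inv ≫ c.ι.app k) e.hom (e.hom_inv_id_assoc _) (H i _)
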